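/- Define the triangular function ∇ : ℝ → ℝ by ∇(t) = t for 0 < t ≤ 1, ∇(t) = 2 − t for 1 < t ≤ 2, and ∇(t) = 0 otherwise. For a positive integer η, a real number c with 0 < c < 1, and positive integers n, m, define A(n,m) := (1/η) ∫_0^η ∇(n − 1 − t − c) · ∇(m − 1 − t − c) dt. Then for every positive integer η, A(η+3, η+3) = c³ / (3η). (Equation (26), second part: the last nonzero diagonal entry of the averaged timing-offset outer product.) -/
import Mathlib


/-- The triangular pulse: ∇(t) = t for 0 < t ≤ 1, 2 − t for 1 < t ≤ 2, 0 otherwise. -/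
noncomputable def tri (t : ℝ) : ℝ :=
  if 0 < t ∧ t ≤ 1 then t else if 1 < t ∧ t ≤ 2 then 2 - t else 0

lemma tri_eq (t : ℝ) : tri t = max 0 (min t (2 - t)) := by
  unfold tri
  split_ifs with h1 h2
  · rw [min_eq_left (by linarith [h1.2]), max_eq_right h1.1.le]
  · rw [min_eq_right (by linarith [h2.1]), max_eq_right (by linarith [h2.2])]
  · push_neg at h1 h2
    rcases le_or_gt t 0 with h | h
    · rw [min_eq_left (by linarith), max_eq_left (by linarith)]
    · have h2t : 2 < t := h2 (h1 h)
      rw [min_eq_right (by linarith), max_eq_left (by linarith)]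

lemma tri_continuous : Continuous tri := by
  rw [show tri = fun t => max 0 (min t (2 - t)) from funext tri_eq]
  fun_prop

lemma tri_of_two_le {x : ℝ} (hx : 2 ≤ x) : tri x = 0 := by
  unfold tri; split_ifs <;> first | linarith | rfl

lemma tri_of_mem {x : ℝ} (h1 : 1 < x) (h2 : x ≤ 2) : tri x = 2 - x := by
  unfold tri
  split_ifs with h h'
  · linarith [h.2]
  · rfl
  · exact absurd ⟨h1, h2⟩ h'

/-- The (n,m) entry of the averaged timing-offset outer product E[U(Δτ)U(Δτ)ᴴ], when the
normalized timing offset is uniform on [0,η] and the normalized LoS path delay is c. -/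
noncomputable def Aent (η : ℕ) (c : ℝ) (n m : ℕ) : ℝ :=
  (1 / (η : ℝ)) * ∫ t in (0:ℝ)..(η : ℝ), tri ((n : ℝ) - 1 - t - c) * tri ((m : ℝ) - 1 - t - c)

/-- Equation (26), second part: the last nonzero diagonal entry (η+3,η+3). -/
theorem Aent_last_diag (η : ℕ) (hη : 0 < η) (c : ℝ) (hc0 : 0 < c) (hc1 : c < 1) :
    Aent η c (η + 3) (η + 3) = c ^ 3 / (3 * (η : ℝ)) := by
  have hη1 : (1 : ℝ) ≤ (η : ℝ) := by exact_mod_cast hη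
  set f : ℝ → ℝ := fun t => tri ((↑(η + 3) : ℝ) - 1 - t - c) * tri ((↑(η + 3) : ℝ) - 1 - t - c)
    with hf
  have hcf : Continuous f := by
    apply Continuous.mul <;> exact tri_continuous.comp (by fun_prop)
  have hsplit : (∫ t in (0:ℝ)..(η : ℝ), f t)
      = (∫ t in (0:ℝ)..((η : ℝ) - c), f t) + ∫ t in ((η : ℝ) - c)..(η : ℝ), f t :=
    (intervalIntegral.integral_add_adjacent_intervals (hcf.intervalIntegrable _ _)
      (hcf.intervalIntegrable _ _)).symm
  have h1 : (∫ t in (0:ℝ)..((η : ℝ) - c), f t) = 0 := by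
    rw [intervalIntegral.integral_congr (g := fun _ => (0:ℝ)) ?_, intervalIntegral.integral_const,
      smul_zero]
    intro t ht
    rw [Set.uIcc_of_le (by linarith)] at ht
    have ht1 := ht.1; have ht2 := ht.2
    have h2le : (2 : ℝ) ≤ (η : ℝ) + 3 - 1 - t - c := by linarith
    simp only [hf]
    push_cast
    rw [tri_of_two_le h2le, zero_mul]
  have h2 : (∫ t in ((η : ℝ) - c)..(η : ℝ), f t) = c ^ 3 / 3 := by
    have hcongr : (∫ t in ((η : ℝ) - c)..(η : ℝ), f t)
        = ∫ t in ((η : ℝ) - c)..(η : ℝ), (t - ((η : ℝ) - c)) ^ 2 := by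
      apply intervalIntegral.integral_congr
      intro t ht
      rw [Set.uIcc_of_le (by linarith)] at ht
      have ht1 := ht.1; have ht2 := ht.2
      have hx1 : (1 : ℝ) < (η : ℝ) + 3 - 1 - t - c := by linarith
      have hx2 : (η : ℝ) + 3 - 1 - t - c ≤ 2 := by linarith
      simp only [hf]
      push_cast
      rw [tri_of_mem hx1 hx2]
      ring
    rw [hcongr, intervalIntegral.integral_comp_sub_right (fun x => x ^ 2) ((η : ℝ) - c)]
    simp [integral_pow]
    ring
  have hηne : (η : ℝ) ≠ 0 := by positivity
  rw [Aent, hsplit, h1, h2]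
  field_simp
  ring
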